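/- arXiv:0907.4017 — 4 statements merged into one kernel-verified Lean document; each statement's English description precedes it below -/
import Mathlib

section
/- Let α be an arbitrary type (the set of propositional variables, of arbitrary cardinality). Let 𝒜 be a family of subsets of the valuation space (α → Bool) such that every A ∈ 𝒜 is nonempty, the members of 𝒜 are pairwise disjoint, and every A ∈ 𝒜 is determined by finitely many coordinates. Then 𝒜 is a countable family (i.e., the set 𝒜 ⊆ Set (Set (α → Bool)) is countable). -/
/-!
Under the product of fair-coin measures on `α → Bool` (which exists for an index type of any
cardinality), a nonempty set determined by a finite set `S` of coordinates
contains a cylinder of mass `2 ^ (-|S|) > 0`. In a probability space only countably many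
disjoint sets can contain a set of positive mass.
-/

open MeasureTheory

theorem Set.Pairwise.countable_of_forall_exists_measure_pos {Ω : Type*} [MeasurableSpace Ω]
    (μ : Measure Ω) [SFinite μ] {𝒜 : Set (Set Ω)} (hdisj : 𝒜.Pairwise Disjoint)
    (hpos : ∀ A ∈ 𝒜, ∃ C ⊆ A, MeasurableSet C ∧ 0 < μ C) : 𝒜.Countable := by
  choose! C hCA hC hCpos using hpos
  have hcount := Measure.countable_meas_pos_of_disjoint_iUnion (μ := μ)
    (As := fun A : 𝒜 => C A) (fun A => hC A A.2)
    (fun A B hAB => (hdisj A.2 B.2 (Subtype.coe_ne_coe.mpr hAB)).mono (hCA A A.2) (hCA B B.2))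
  have huniv : {A : 𝒜 | 0 < μ (C A)} = Set.univ :=
    Set.eq_univ_of_forall fun A => hCpos A A.2
  rw [huniv, Set.countable_univ_iff] at hcount
  exact Set.countable_coe_iff.mp hcount

theorem DependsOn.pi_singleton_subset {ι : Type*} {X : ι → Type*} {A : Set (∀ i, X i)}
    {s : Set ι} (hA : DependsOn (· ∈ A) s) {v : ∀ i, X i} (hv : v ∈ A) :
    s.pi (fun i => {v i}) ⊆ A :=
  fun _ hw => (hA fun i hi => (hw i hi).symm).mp hv

theorem MeasureTheory.Measure.infinitePi_pi_singleton_pos {ι : Type*} {X : ι → Type*}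
    [∀ i, MeasurableSpace (X i)] [∀ i, MeasurableSingletonClass (X i)]
    (μ : ∀ i, Measure (X i)) [∀ i, IsProbabilityMeasure (μ i)]
    (hμ : ∀ i x, μ i {x} ≠ 0) (s : Finset ι) (v : ∀ i, X i) :
    0 < Measure.infinitePi μ ((s : Set ι).pi fun i => {v i}) := by
  rw [Measure.infinitePi_pi μ fun i _ => MeasurableSet.singleton (v i), pos_iff_ne_zero,
    Finset.prod_ne_zero_iff]
  exact fun i _ => hμ i (v i)

theorem Set.Pairwise.countable_of_dependsOn_finset {ι : Type*} {X : ι → Type*}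
    [∀ i, MeasurableSpace (X i)] [∀ i, MeasurableSingletonClass (X i)]
    (μ : ∀ i, Measure (X i)) [∀ i, IsProbabilityMeasure (μ i)] (hμ : ∀ i x, μ i {x} ≠ 0)
    {𝒜 : Set (Set (∀ i, X i))} (hne : ∀ A ∈ 𝒜, A.Nonempty) (hdisj : 𝒜.Pairwise Disjoint)
    (hdep : ∀ A ∈ 𝒜, ∃ s : Finset ι, DependsOn (· ∈ A) s) : 𝒜.Countable := by
  refine hdisj.countable_of_forall_exists_measure_pos (Measure.infinitePi μ) fun A hA => ?_
  obtain ⟨v, hv⟩ := hne A hA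
  obtain ⟨s, hs⟩ := hdep A hA
  exact ⟨_, hs.pi_singleton_subset hv,
    .pi s.countable_toSet fun i _ => .singleton (v i),
    Measure.infinitePi_pi_singleton_pos μ hμ s v⟩

/-- Any family of nonempty, pairwise disjoint subsets of the valuation space `α → Bool`,
each of which is determined by finitely many coordinates, is countable. -/
theorem countable_of_pairwise_disjoint_finitely_determined
    {α : Type*} (𝒜 : Set (Set (α → Bool)))
    (hne : ∀ A ∈ 𝒜, A.Nonempty)
    (hdisj : 𝒜.Pairwise fun A B => Disjoint A B)
    (hfin : ∀ A ∈ 𝒜, ∃ S : Finset α,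
      ∀ v w : α → Bool, (∀ p ∈ S, v p = w p) → (v ∈ A ↔ w ∈ A)) :
    𝒜.Countable := by
  have hcoin : ∀ b : Bool, (PMF.uniformOfFintype Bool).toMeasure {b} ≠ 0 := fun b => by simp
  refine hdisj.countable_of_dependsOn_finset (fun _ => _) (fun _ => hcoin) hne fun A hA => ?_
  obtain ⟨S, hS⟩ := hfin A hA
  exact ⟨S, fun v w h => propext (hS v w h)⟩
end

section
/- Let α be a type and n ∈ ℕ. Let 𝒜 be a pairwise disjoint family of subsets of (α → Bool) each of which is a cylinder on exactly n coordinates, i.e., each A ∈ 𝒜 has the form {v : α → Bool | ∀ p ∈ S, v p = u p} for some finite set S ⊆ α with |S| = n and some u : α → Bool. Then 𝒜 is a finite family. -/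
/-- Cylinder over `S` determined by `u`. -/
def cylSet {α : Type*} (S : Finset α) (u : α → Bool) : Set (α → Bool) :=
  {v | ∀ p ∈ S, v p = u p}

lemma cylSet_disjoint_exists {α : Type*} {S S' : Finset α} {u u' : α → Bool}
    (h : Disjoint (cylSet S u) (cylSet S' u')) :
    ∃ q, q ∈ S ∧ q ∈ S' ∧ u q ≠ u' q := by
  classical
  by_contra hc
  push_neg at hc
  set v : α → Bool := fun q => if q ∈ S then u q else u' q with hv
  have hv1 : v ∈ cylSet S u := by intro p hp; simp [hv, hp]
  have hv2 : v ∈ cylSet S' u' := by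
    intro p hp
    by_cases hpS : p ∈ S
    · simp [hv, hpS, hc p hpS hp]
    · simp [hv, hpS]
  exact Set.disjoint_left.mp h hv1 hv2

/-- For fixed `n`, a pairwise disjoint family of cylinders on exactly `n` coordinates
is finite. -/
theorem pairwise_disjoint_cylinders_on_n_coords_finite
    {α : Type*} (n : ℕ) (𝒜 : Set (Set (α → Bool)))
    (hdisj : 𝒜.Pairwise fun A B => Disjoint A B)
    (hform : ∀ A ∈ 𝒜, ∃ (S : Finset α) (u : α → Bool), S.card = n ∧
      A = {v : α → Bool | ∀ p ∈ S, v p = u p}) :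
    𝒜.Finite := by
  classical
  induction n generalizing 𝒜 with
  | zero =>
    apply Set.Finite.subset (Set.finite_singleton (Set.univ : Set (α → Bool)))
    intro A hA
    obtain ⟨S, u, hS, rfl⟩ := hform A hA
    rw [Finset.card_eq_zero] at hS
    subst hS
    simp [Set.eq_univ_iff_forall]
  | succ n ih =>
    rcases 𝒜.eq_empty_or_nonempty with h | ⟨A0, hA0⟩
    · simp [h]
    choose! S u hcard hrepr using hform
    -- every B ≠ A0 in 𝒜 disagrees with A0 on some coordinate of S A0
    set fib : α → Bool → Set (Set (α → Bool)) :=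
      fun p b => {B | B ∈ 𝒜 ∧ B ≠ A0 ∧ p ∈ S B ∧ u B p = b} with hfib
    have hsub : 𝒜 ⊆ insert A0 (⋃ p ∈ S A0, ⋃ b : Bool, fib p b) := by
      intro B hB
      by_cases hBA : B = A0
      · exact Set.mem_insert_iff.mpr (Or.inl hBA)
      · have hd : Disjoint B A0 := hdisj hB hA0 hBA
        rw [hrepr B hB, hrepr A0 hA0] at hd
        obtain ⟨q, hq1, hq2, _⟩ := cylSet_disjoint_exists hd
        refine Set.mem_insert_iff.mpr (Or.inr ?_)
        refine Set.mem_biUnion hq2 ?_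
        exact Set.mem_iUnion.mpr ⟨u B q, hB, hBA, hq1, rfl⟩
    refine Set.Finite.subset (Set.Finite.insert A0 ?_) hsub
    refine Set.Finite.biUnion (S A0).finite_toSet fun p _ => ?_
    refine Set.finite_iUnion fun b => ?_
    -- the reduction map
    set f : Set (α → Bool) → Set (α → Bool) :=
      fun B => cylSet ((S B).erase p) (u B) with hf
    -- disjointness of reduced cylinders for distinct members of the fiber
    have hkey : ∀ B ∈ fib p b, ∀ B' ∈ fib p b, B ≠ B' → Disjoint (f B) (f B') := by
      intro B hB B' hB' hne
      obtain ⟨hB𝒜, _, hpB, hub⟩ := hB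
      obtain ⟨hB'𝒜, _, hpB', hub'⟩ := hB'
      have hd : Disjoint B B' := hdisj hB𝒜 hB'𝒜 hne
      rw [hrepr B hB𝒜, hrepr B' hB'𝒜] at hd
      obtain ⟨q, hq1, hq2, hq3⟩ := cylSet_disjoint_exists hd
      have hqp : q ≠ p := by
        intro h; subst h; exact hq3 (hub.trans hub'.symm)
      rw [Set.disjoint_left]
      intro v hv hv'
      have h1 : v q = u B q := hv q (Finset.mem_erase.mpr ⟨hqp, hq1⟩)
      have h2 : v q = u B' q := hv' q (Finset.mem_erase.mpr ⟨hqp, hq2⟩)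
      exact hq3 (h1 ▸ h2)
    have hinj : Set.InjOn f (fib p b) := by
      intro B hB B' hB' hfeq
      by_contra hne
      have hd := hkey B hB B' hB' hne
      rw [hfeq] at hd
      have hne' : (f B').Nonempty := ⟨u B', fun q hq => rfl⟩
      exact hne'.ne_empty (disjoint_self.mp hd)
    have himfin : (f '' fib p b).Finite := by
      apply ih
      · rintro C ⟨B, hB, rfl⟩ C' ⟨B', hB', rfl⟩ hne
        exact hkey B hB B' hB' (fun h => hne (by rw [h]))
      · rintro C ⟨B, hB, rfl⟩
        refine ⟨(S B).erase p, u B, ?_, rfl⟩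
        rw [Finset.card_erase_of_mem hB.2.2.1, hcard B hB.1]
        rfl
    exact (Set.Finite.of_finite_image himfin hinj)
end

section
/- Let α be a type. Let 𝒜 be a pairwise disjoint family of nonempty subsets of (α → Bool) each of which is a cylinder over some finite set of coordinates, i.e., each A ∈ 𝒜 has the form {v : α → Bool | ∀ p ∈ S, v p = u p} for some finite S ⊆ α and some u : α → Bool. Then 𝒜 is countable. -/
/-!
Under the fair coin-flip product measure on `α → Bool`, the cylinder over `S` has measure
`2 ^ (-#S) > 0`, and in a probability space only countably many pairwise disjoint measurable
sets can have positive measure (at most `2 ^ n` of them have measure `≥ 2 ^ (-n)`).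
-/

open MeasureTheory

theorem Set.Pairwise.countable_of_measure_pos {Ω : Type*} [MeasurableSpace Ω] (μ : Measure Ω)
    [SFinite μ] {𝒜 : Set (Set Ω)} (hdisj : 𝒜.Pairwise Disjoint)
    (hmeas : ∀ A ∈ 𝒜, MeasurableSet A) (hpos : ∀ A ∈ 𝒜, 0 < μ A) : 𝒜.Countable := by
  have h := Measure.countable_meas_pos_of_disjoint_iUnion (μ := μ) (As := ((↑) : 𝒜 → Set Ω))
    (fun A => hmeas A A.2) (fun A B hAB => hdisj A.2 B.2 (Subtype.coe_ne_coe.mpr hAB))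
  rw [Set.countable_coe_iff.symm, ← Set.countable_univ_iff]
  simpa [hpos _ (Subtype.mem _)] using h

noncomputable def coinFlips (α : Type*) : Measure (α → Bool) :=
  Measure.infinitePi fun _ => (PMF.uniformOfFintype Bool).toMeasure

instance (α : Type*) : IsProbabilityMeasure (coinFlips α) := by
  unfold coinFlips; infer_instance

theorem cylinder_eq_pi {α : Type*} (S : Finset α) (u : α → Bool) :
    {v : α → Bool | ∀ p ∈ S, v p = u p} = (S : Set α).pi fun p => {u p} := by
  ext v; simp

theorem measurableSet_cylinder {α : Type*} (S : Finset α) (u : α → Bool) :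
    MeasurableSet {v : α → Bool | ∀ p ∈ S, v p = u p} := by
  rw [cylinder_eq_pi]
  exact .pi S.countable_toSet fun _ _ => .singleton _

theorem coinFlips_cylinder_pos {α : Type*} (S : Finset α) (u : α → Bool) :
    0 < coinFlips α {v : α → Bool | ∀ p ∈ S, v p = u p} := by
  rw [cylinder_eq_pi, coinFlips, Measure.infinitePi_pi _ fun _ _ => .singleton _]
  refine pos_iff_ne_zero.mpr (Finset.prod_ne_zero_iff.mpr fun p _ => ?_)
  simp

theorem pairwise_disjoint_cylinders_countable_general
    {α : Type*} (𝒜 : Set (Set (α → Bool)))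
    (hdisj : 𝒜.Pairwise fun A B => Disjoint A B)
    (hform : ∀ A ∈ 𝒜, ∃ (S : Finset α) (u : α → Bool),
      A = {v : α → Bool | ∀ p ∈ S, v p = u p}) :
    𝒜.Countable := by
  refine hdisj.countable_of_measure_pos (coinFlips α) ?_ ?_ <;> intro A hA <;>
    obtain ⟨S, u, rfl⟩ := hform A hA
  · exact measurableSet_cylinder S u
  · exact coinFlips_cylinder_pos S u

/-- A pairwise disjoint family of nonempty cylinders over finite sets of coordinates
is countable. -/
theorem pairwise_disjoint_cylinders_countable
    {α : Type*} (𝒜 : Set (Set (α → Bool)))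
    (hne : ∀ A ∈ 𝒜, A.Nonempty)
    (hdisj : 𝒜.Pairwise fun A B => Disjoint A B)
    (hform : ∀ A ∈ 𝒜, ∃ (S : Finset α) (u : α → Bool),
      A = {v : α → Bool | ∀ p ∈ S, v p = u p}) :
    𝒜.Countable :=
  pairwise_disjoint_cylinders_countable_general 𝒜 hdisj hform
end

section
/- Let X' and X'' be partial orders and assume the strict order < on X' is well-founded. Equip X' × X'' with the componentwise (product) partial order: (c,d) ≤ (a,b) iff c ≤ a and d ≤ b. For a set T in a partial order, let μ(T) denote the set of minimal elements of T (elements t ∈ T such that no s ∈ T satisfies s < t). Let Σ ⊆ X' × X'' and let Σ'' = Prod.snd '' Σ be its projection to X''. Then Prod.snd '' μ(Set.univ ×ˢ Σ'') ⊆ Prod.snd '' μ(Σ); that is, every second coordinate of a minimal element of the full cylinder X' × Σ'' is the second coordinate of some minimal element of Σ. -/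
/-- The set of minimal elements of `T`: elements of `T` with nothing of `T` strictly
below them. -/
def minimalElems {γ : Type*} [PartialOrder γ] (T : Set γ) : Set γ :=
  {t ∈ T | ∀ s ∈ T, ¬ s < t}

/-- Condition (μ*3): in the componentwise product order on `X' × X''` (with `<`
well-founded on `X'`), every second coordinate of a minimal element of the full
cylinder `univ ×ˢ (snd '' Σ)` is the second coordinate of some minimal element of `Σ`. -/
theorem snd_image_minimals_cylinder_subset
    {X' X'' : Type*} [PartialOrder X'] [PartialOrder X'']
    (hwf : WellFounded ((· < ·) : X' → X' → Prop))
    (Sig : Set (X' × X'')) :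
    Prod.snd '' minimalElems ((Set.univ : Set X') ×ˢ (Prod.snd '' Sig)) ⊆
      Prod.snd '' minimalElems Sig := by
  rintro _ ⟨⟨a, b⟩, ⟨⟨-, hb⟩, hmin⟩, rfl⟩
  -- b is minimal in Σ''
  have hbmin : ∀ t ∈ Prod.snd '' Sig, ¬ t < b := by
    intro t ht hlt
    exact hmin (a, t) ⟨Set.mem_univ _, ht⟩ (Prod.mk_lt_mk_iff_right.mpr hlt)
  obtain ⟨⟨a', b'⟩, hmem, hb'⟩ := hb
  simp only at hb'; rw [hb'] at hmem
  -- pick a wf-minimal a* in {x | (x,b) ∈ Σ}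
  obtain ⟨c, hc, hcmin⟩ := hwf.has_min {x | (x, b) ∈ Sig} ⟨a', hmem⟩
  refine ⟨(c, b), ⟨hc, ?_⟩, rfl⟩
  rintro ⟨s, t⟩ hst hlt
  rw [Prod.lt_iff] at hlt
  have htb : t ≤ b := by rcases hlt with ⟨h1, h2⟩ | ⟨h1, h2⟩; exacts [h2, le_of_lt h2]
  rcases lt_or_eq_of_le htb with h | rfl
  · exact hbmin t ⟨(s, t), hst, rfl⟩ h
  · rcases hlt with ⟨h1, _⟩ | ⟨h1, h2⟩
    · exact hcmin s hst h1
    · exact lt_irrefl _ h2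
end
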